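/- 1 - 1/5 + 1/9 - 1/13 + ⋯ = ∑_{n=0}^∞ (-1)ⁿ/(4n+1) = π/(4√2) + ln(1+√2)/(2√2). -/

import Mathlib

open Filter Topology

lemma hasDerivAt_F (x : ℝ) :
    HasDerivAt (fun x : ℝ =>
      (1/(4*Real.sqrt 2)) * (Real.log (x^2 + Real.sqrt 2*x + 1) - Real.log (x^2 - Real.sqrt 2*x + 1))
      + (1/(2*Real.sqrt 2)) * (Real.arctan (Real.sqrt 2*x+1) + Real.arctan (Real.sqrt 2*x-1)))
      (1/(1+x^4)) x := by
  set c := Real.sqrt 2 with hc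
  have hc2 : c^2 = 2 := Real.sq_sqrt (by norm_num)
  have hcpos : 0 < c := Real.sqrt_pos.mpr (by norm_num)
  have hp : 0 < x^2 + c*x + 1 := by nlinarith [sq_nonneg (c*x+1)]
  have hq : 0 < x^2 - c*x + 1 := by nlinarith [sq_nonneg (c*x-1)]
  have hx4 : (0:ℝ) < 1 + x^4 := by positivity
  have h1 : HasDerivAt (fun x : ℝ => x^2 + c*x + 1) (2*x + c) x := by
    simpa [add_assoc, Pi.add_def] using ((hasDerivAt_pow 2 x).add (((hasDerivAt_id x).const_mul c).add_const 1))
  have h2 : HasDerivAt (fun x : ℝ => x^2 - c*x + 1) (2*x - c) x := by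
    simpa using (((hasDerivAt_pow 2 x).sub ((hasDerivAt_id x).const_mul c)).add_const 1)
  have h3 : HasDerivAt (fun x : ℝ => c*x + 1) c x := by
    simpa using ((hasDerivAt_id x).const_mul c).add_const 1
  have h4 : HasDerivAt (fun x : ℝ => c*x - 1) c x := by
    simpa using ((hasDerivAt_id x).const_mul c).sub_const 1
  have hl1 : HasDerivAt (fun x : ℝ => Real.log (x^2 + c*x + 1))
      ((x^2 + c*x + 1)⁻¹ * (2*x + c)) x := by exact (Real.hasDerivAt_log hp.ne').comp x h1
  have hl2 : HasDerivAt (fun x : ℝ => Real.log (x^2 - c*x + 1))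
      ((x^2 - c*x + 1)⁻¹ * (2*x - c)) x := by exact (Real.hasDerivAt_log hq.ne').comp x h2
  have ha1 : HasDerivAt (fun x : ℝ => Real.arctan (c*x+1))
      (1/(1+(c*x+1)^2) * c) x := by exact (Real.hasDerivAt_arctan (c*x+1)).comp x h3
  have ha2 : HasDerivAt (fun x : ℝ => Real.arctan (c*x-1))
      (1/(1+(c*x-1)^2) * c) x := by exact (Real.hasDerivAt_arctan (c*x-1)).comp x h4
  have hD := ((hl1.sub hl2).const_mul (1/(4*c))).add ((ha1.add ha2).const_mul (1/(2*c)))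
  refine hD.congr_deriv ?_
  symm
  have hu : (0:ℝ) < 1+(c*x+1)^2 := by positivity
  have hv : (0:ℝ) < 1+(c*x-1)^2 := by positivity
  field_simp [show x*(x+c)+1 ≠ 0 by nlinarith, show x*(x-c)+1 ≠ 0 by nlinarith]
  linear_combination ((-24:ℝ) * x^2 * c + 8 * x^4 * c + 8 * x^6 * c + 8 * x^8 * c + 12 * x^4 * c^3
    + 4 * x^6 * c^3 + 12 * x^8 * c^3 + 4 * x^10 * c^3 - 8 * x^6 * c^5) * hc2
lemma cont_inv4 : Continuous (fun x : ℝ => 1/(1+x^4)) := by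
  apply Continuous.div continuous_const (by continuity)
  intro x; positivity

lemma integral_val : ∫ x in (0:ℝ)..1, 1/(1+x^4)
    = Real.pi / (4 * Real.sqrt 2) + Real.log (1 + Real.sqrt 2) / (2 * Real.sqrt 2) := by
  rw [intervalIntegral.integral_eq_sub_of_hasDerivAt (fun x _ => hasDerivAt_F x)
    (cont_inv4.intervalIntegrable 0 1)]
  set c := Real.sqrt 2 with hc
  have hc2 : c^2 = 2 := Real.sq_sqrt (by norm_num)
  have hcpos : 0 < c := Real.sqrt_pos.mpr (by norm_num)
  have hc1 : 1 < c := by nlinarith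
  have e1 : (1:ℝ)^2 + c*1 + 1 = 2 + c := by ring
  have e2 : (1:ℝ)^2 - c*1 + 1 = 2 - c := by ring
  have harc : Real.arctan (c*1+1) + Real.arctan (c*1-1) = Real.pi/2 := by
    have hinv : c*1-1 = (c*1+1)⁻¹ := by
      have h : (c*1-1)*(c*1+1) = 1 := by linear_combination hc2
      exact eq_inv_of_mul_eq_one_left h
    rw [hinv, Real.arctan_inv_of_pos (by nlinarith)]
    ring
  have hlog : Real.log (2 + c) - Real.log (2 - c) = 2 * Real.log (1 + c) := by
    have h22 : (2:ℝ) + c = (1+c)^2 * (2-c) := by linear_combination c * hc2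
    rw [h22, Real.log_mul (by positivity) (by nlinarith), Real.log_pow]
    push_cast; ring
  simp only [e1, e2, harc, hlog]
  norm_num [Real.log_one, Real.arctan_one, Real.arctan_neg]
  ring
theorem sum_4n_plus_1 :
    Tendsto (fun N => ∑ n ∈ Finset.range N, (-1 : ℝ) ^ n / (4 * n + 1))
      atTop (𝓝 (Real.pi / (4 * Real.sqrt 2) +
        Real.log (1 + Real.sqrt 2) / (2 * Real.sqrt 2))) := by
  rw [← integral_val]
  have key : ∀ N : ℕ, |(∑ n ∈ Finset.range N, (-1:ℝ)^n/(4*n+1))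
      - ∫ x in (0:ℝ)..1, 1/(1+x^4)| ≤ 1/(4*N+1) := by
    intro N
    have hcontg : Continuous (fun x : ℝ => (-(x^4))^N/(1+x^4)) := by
      apply Continuous.div (by continuity) (by continuity)
      intro x; positivity
    have hsum : (∑ n ∈ Finset.range N, (-1:ℝ)^n/(4*n+1))
        = ∫ x in (0:ℝ)..1, ∑ n ∈ Finset.range N, (-(x^4))^n := by
      rw [intervalIntegral.integral_finset_sum
        (fun n _ => (Continuous.intervalIntegrable (by continuity) 0 1))]
      refine Finset.sum_congr rfl fun n _ => ?_
      have h : ∀ x : ℝ, (-(x^4))^n = (-1:ℝ)^n * x^(4*n) := fun x => by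
        rw [neg_pow, pow_mul]
      simp_rw [h, intervalIntegral.integral_const_mul, integral_pow]
      push_cast
      norm_num
      ring
    have hpt : ∀ x : ℝ, (∑ n ∈ Finset.range N, (-(x^4))^n)
        - 1/(1+x^4) = -((-(x^4))^N/(1+x^4)) := by
      intro x
      have hx4 : (0:ℝ) ≤ x^4 := by positivity
      have hne : -(x^4) ≠ 1 := by nlinarith
      have hpos : (0:ℝ) < 1 + x^4 := by positivity
      have h1 : ((-(x^4))^N - 1)/(-(x^4) - 1) = (1 - (-(x^4))^N)/(1+x^4) := by
        rw [div_eq_div_iff (by nlinarith) hpos.ne']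
        ring
      rw [geom_sum_eq hne, h1, div_sub_div_same, ← neg_div]
      ring_nf
    have hdiff : (∑ n ∈ Finset.range N, (-1:ℝ)^n/(4*n+1)) - ∫ x in (0:ℝ)..1, 1/(1+x^4)
        = -∫ x in (0:ℝ)..1, (-(x^4))^N/(1+x^4) := by
      rw [hsum, ← intervalIntegral.integral_sub
        ((Continuous.intervalIntegrable (by continuity) 0 1))
        (cont_inv4.intervalIntegrable 0 1), ← intervalIntegral.integral_neg]
      exact intervalIntegral.integral_congr fun x _ => hpt x
    rw [hdiff, abs_neg]
    have h1 : |∫ x in (0:ℝ)..1, (-(x^4))^N/(1+x^4)|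
        ≤ ∫ x in (0:ℝ)..1, |(-(x^4))^N/(1+x^4)| := by
      exact
        intervalIntegral.abs_integral_le_integral_abs
          (f := fun x : ℝ => (-(x^4))^N/(1+x^4)) (μ := MeasureTheory.volume) (zero_le_one)
    refine h1.trans ?_
    have h2 : ∫ x in (0:ℝ)..1, |(-(x^4))^N/(1+x^4)| ≤ ∫ x in (0:ℝ)..1, x^(4*N) := by
      apply intervalIntegral.integral_mono_on zero_le_one
        (hcontg.abs.intervalIntegrable 0 1)
        ((Continuous.intervalIntegrable (by continuity) 0 1))
      intro x hx
      obtain ⟨hx0, _⟩ := hx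
      have hx4 : (0:ℝ) ≤ x^4 := by positivity
      have hpos : (0:ℝ) < 1 + x^4 := by positivity
      rw [abs_div, abs_pow, abs_neg, abs_of_nonneg hx4, abs_of_pos hpos, ← pow_mul]
      exact div_le_self (by positivity) (by linarith)
    refine h2.trans ?_
    rw [integral_pow]
    push_cast
    norm_num
  have h0 : Tendsto (fun N : ℕ => 1/(4*(N:ℝ)+1)) atTop (𝓝 0) := by
    apply squeeze_zero (fun n => by positivity) (fun n => ?_)
      tendsto_one_div_add_atTop_nhds_zero_nat
    have hn : (n:ℝ) + 1 ≤ 4*n + 1 := by nlinarith [Nat.cast_nonneg (α := ℝ) n]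
    exact one_div_le_one_div_of_le (by positivity) hn
  rw [tendsto_iff_norm_sub_tendsto_zero]
  apply squeeze_zero (fun n => norm_nonneg _) (fun n => ?_) h0
  simpa [Real.norm_eq_abs] using key n
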